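/- Let T = ℤ/2 × ℤ/2, s = (1,0) ∈ T, R = T[x]/⟨sx, x²⟩, and S = {1, s}. Then R is a u-S-semisimple ring but R is not a semisimple ring (R is not reduced since x² = 0 with x ≠ 0). -/

import Mathlib

open Polynomial

/-- The base ring `T = ℤ/2 × ℤ/2`. -/
abbrev T19 : Type := ZMod 2 × ZMod 2

/-- The element `s = (1, 0)`. -/
def s19 : T19 := (1, 0)

/-- The ideal `⟨sx, x²⟩` of `T[x]`. -/
noncomputable def I19 : Ideal (Polynomial T19) := Ideal.span {C s19 * X, X ^ 2}

/-- The ring `R = T[x]/⟨sx, x²⟩`. -/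
abbrev R19 : Type := Polynomial T19 ⧸ I19

/-- The image of `s` in `R`. -/
noncomputable def sbar19 : R19 := Ideal.Quotient.mk I19 (C s19)

/-- The multiplicative set `S = {1, s}` (the powers of the idempotent `s`). -/
noncomputable def S19 : Submonoid R19 := Submonoid.powers sbar19

/-- `R` is a `u`-`S`-semisimple ring: there is a uniform `s' ∈ S` such that every ideal
`I` admits `f : R → I` with `f(i) = s'·i` for all `i ∈ I`. -/
def IsUSSemisimpleRing {R : Type} [CommRing R] (S : Submonoid R) : Prop :=
  ∃ s ∈ S, ∀ I : Ideal R, ∃ f : R →ₗ[R] I, ∀ i ∈ I, ((f i : R)) = s * i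

/-! If `e ∈ S` and `e * r ∈ {0, e}` for every `r`, then multiplication by `e` is the required
map `R → I` when `e ∈ I`, and the zero map works otherwise, since then `e * I = 0`.
In `R = T[x]/⟨sx, x²⟩` the element `s̄` has this property because `s̄ x = 0` and `s t ∈ {0, s}`
for `t ∈ T`. On the other hand `x̄` is a nonzero nilpotent, so `R` is not reduced, hence
not semisimple. -/

theorem isUSSemisimpleRing_of_mul_eq_zero_or_eq {R : Type} [CommRing R] {S : Submonoid R}
    {e : R} (heS : e ∈ S) (he : ∀ r, e * r = 0 ∨ e * r = e) : IsUSSemisimpleRing S := by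
  refine ⟨e, heS, fun I => ?_⟩
  by_cases heI : e ∈ I
  · exact ⟨LinearMap.toSpanSingleton R I ⟨e, heI⟩, fun i _ => mul_comm i e⟩
  · refine ⟨0, fun i hi => ?_⟩
    rcases he i with h | h
    · simp [h]
    · exact absurd (h ▸ I.mul_mem_left e hi) heI

theorem s19_mul_eq_zero_or_eq : ∀ t : T19, s19 * t = 0 ∨ s19 * t = s19 := by decide

theorem sbar19_isIdempotentElem : IsIdempotentElem sbar19 :=
  ((show IsIdempotentElem s19 by unfold IsIdempotentElem; decide).map C).map (Ideal.Quotient.mk I19)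

theorem sbar19_mul_eq_zero_or_eq (r : R19) : sbar19 * r = 0 ∨ sbar19 * r = sbar19 := by
  obtain ⟨p, rfl⟩ := Ideal.Quotient.mk_surjective r
  have hp : sbar19 * Ideal.Quotient.mk I19 p = Ideal.Quotient.mk I19 (C (s19 * p.coeff 0)) := by
    rw [sbar19, ← map_mul, C_mul, Ideal.Quotient.eq, ← mul_sub]
    obtain ⟨q, hq⟩ := X_dvd_sub_C (p := p)
    rw [hq, ← mul_assoc]
    exact Ideal.mul_mem_right _ _ (Ideal.subset_span (Set.mem_insert _ _))
  rcases s19_mul_eq_zero_or_eq (p.coeff 0) with h | h <;> rw [hp, h]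
  · exact .inl (by simp)
  · exact .inr rfl

theorem X_notMem_I19 : X ∉ I19 := by
  intro hX
  -- projecting `T` onto its second factor kills `sx`, so it maps `I19` into `⟨x²⟩`
  have h := Ideal.mem_map_of_mem (mapRingHom (RingHom.snd (ZMod 2) (ZMod 2))) hX
  rw [I19, Ideal.map_span, Set.image_pair] at h
  simp only [s19, coe_mapRingHom, Polynomial.map_mul, map_C, RingHom.coe_snd, map_zero, map_X,
    zero_mul, Polynomial.map_pow, Submodule.span_insert_zero] at h
  rw [Ideal.mem_span_singleton, X_pow_dvd_iff] at h
  simpa using h 1 one_lt_two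

theorem isNilpotent_mk_X_I19 : IsNilpotent (Ideal.Quotient.mk I19 X) :=
  ⟨2, by rw [← map_pow, Ideal.Quotient.eq_zero_iff_mem]
         exact Ideal.subset_span (Set.mem_insert_of_mem _ rfl)⟩

theorem not_isReduced_R19 : ¬ IsReduced R19 := fun h =>
  X_notMem_I19 (Ideal.Quotient.eq_zero_iff_mem.mp (h.eq_zero _ isNilpotent_mk_X_I19))

/-- `R = T[x]/⟨sx, x²⟩` with `S = {1, s}` is a `u`-`S`-semisimple ring
which is not semisimple (and indeed `S = {1, s̄}` and `R` is not reduced). -/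
theorem uS_semisimple_not_semisimple_example :
    (S19 : Set R19) = {1, sbar19} ∧
    IsUSSemisimpleRing (R := R19) S19 ∧
    ¬ IsSemisimpleRing R19 ∧
    ¬ IsReduced R19 :=
  ⟨sbar19_isIdempotentElem.coe_powers,
    isUSSemisimpleRing_of_mul_eq_zero_or_eq (Submonoid.mem_powers _) sbar19_mul_eq_zero_or_eq,
    fun h => not_isReduced_R19 (@instIsReducedOfIsSemisimpleRing R19 _ h), not_isReduced_R19⟩
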